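/- (Corollary, converse direction without nonnegativity.) Let m1 > m2 > 0 with m1 + m2 = n. Let Y be a symmetric 2n×2n matrix with blocks Y = [[Y11, Y12],[Y12ᵀ, Y22]] and y := diag(Y) satisfying tr(Y11) = m1, tr(J Y11) = m1², tr(Y22) = m2, tr(J Y22) = m2², diag(Y12) = 0, tr(J(Y12 + Y12ᵀ)) = 2 m1 m2, and Y − y yᵀ ⪰ 0 (no entrywise nonnegativity). Then X := Y11 with x := diag(Y11) satisfies eᵀx = m1, tr(JX) = m1², Xe = m1·x, and X ⪰ 0, i.e., X is feasible for the simplified relaxation (8) without its entrywise inequality constraints. -/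

import Mathlib

open Matrix BigOperators

lemma traceJ_eq {n : ℕ} (A : Matrix (Fin n) (Fin n) ℝ) :
    Matrix.trace ((Matrix.of fun _ _ => (1:ℝ)) * A) = ∑ i, ∑ j, A i j := by
  simp only [Matrix.trace, Matrix.diag, Matrix.mul_apply, Matrix.of_apply, one_mul]
  exact Finset.sum_comm

lemma constQuad {n : ℕ} (A : Matrix (Fin n) (Fin n) ℝ) (c d : ℝ) :
    (fun _ => c) ⬝ᵥ (A *ᵥ fun _ => d) = c * d * ∑ i, ∑ j, A i j := by
  simp only [dotProduct, Matrix.mulVec, Finset.mul_sum]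
  refine Finset.sum_congr rfl fun i _ => Finset.sum_congr rfl fun j _ => by ring

lemma constDot {n : ℕ} (v : Fin n → ℝ) (c : ℝ) :
    (fun _ => c) ⬝ᵥ v = c * ∑ i, v i := by
  simp [dotProduct, Finset.mul_sum]

lemma vmv_mulVec {m : Type*} [Fintype m] (a b c : m → ℝ) :
    Matrix.vecMulVec a b *ᵥ c = (b ⬝ᵥ c) • a := by
  funext i
  simp only [Matrix.vecMulVec, Matrix.mulVec, dotProduct, Matrix.of_apply,
    Pi.smul_apply, smul_eq_mul, Finset.sum_mul]
  exact Finset.sum_congr rfl fun j _ => by ring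

lemma psd_vecMulVec {m : Type*} [Fintype m] (a : m → ℝ) :
    (Matrix.vecMulVec a a).PosSemidef := by
  refine Matrix.posSemidef_iff_dotProduct_mulVec.mpr ⟨?_, ?_⟩
  · ext i j; simp [Matrix.vecMulVec, Matrix.conjTranspose_apply, mul_comm]
  · intro v
    rw [vmv_mulVec]
    have : star v ⬝ᵥ (a ⬝ᵥ v) • a = (a ⬝ᵥ v) * (a ⬝ᵥ v) := by
      simp only [dotProduct, Pi.smul_apply, smul_eq_mul, Pi.star_apply, star_trivial,
        Finset.sum_mul, Finset.mul_sum]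
      rw [Finset.sum_comm]
      refine Finset.sum_congr rfl fun i _ => Finset.sum_congr rfl fun j _ => by ring
    rw [this]
    exact mul_self_nonneg _

/-- Corollary, converse direction without nonnegativity:
If the symmetric block matrix `Y = [[Y11, Y12], [Y12ᵀ, Y22]]` satisfies the
constraints of the vector-lifting relaxation (3) except entrywise nonnegativity,
then `X := Y11` with `x := diag Y11` satisfies `eᵀ x = m1`, `tr (J X) = m1²`,
`X e = m1 x` and `X ⪰ 0`, i.e., `X` is feasible for the simplified relaxation (8)
without its entrywise inequality constraints. -/
theorem vector_lifting_to_simplified_no_nonneg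
    (n : ℕ) (hn : 0 < n) (m1 m2 : ℝ)
    (hm : m1 + m2 = n) (h12 : m1 > m2) (h2pos : m2 > 0)
    (e : Fin n → ℝ) (he : e = fun _ => 1)
    (J : Matrix (Fin n) (Fin n) ℝ) (hJ : J = Matrix.of fun _ _ => 1)
    (Y11 Y12 Y22 : Matrix (Fin n) (Fin n) ℝ)
    (Y : Matrix (Fin n ⊕ Fin n) (Fin n ⊕ Fin n) ℝ)
    (hY : Y = Matrix.fromBlocks Y11 Y12 Y12ᵀ Y22)
    (hYsymm : Y.IsSymm)
    (htr11 : Matrix.trace Y11 = m1) (htrJ11 : Matrix.trace (J * Y11) = m1 ^ 2)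
    (htr22 : Matrix.trace Y22 = m2) (htrJ22 : Matrix.trace (J * Y22) = m2 ^ 2)
    (hdiag12 : Y12.diag = 0)
    (htrJ12 : Matrix.trace (J * (Y12 + Y12ᵀ)) = 2 * m1 * m2)
    (hpsd : (Y - vecMulVec Y.diag Y.diag).PosSemidef)
    (X : Matrix (Fin n) (Fin n) ℝ) (hX : X = Y11)
    (x : Fin n → ℝ) (hx : x = Y11.diag) :
    X.IsSymm ∧
    e ⬝ᵥ x = m1 ∧
    Matrix.trace (J * X) = m1 ^ 2 ∧
    X *ᵥ e = m1 • x ∧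
    X.PosSemidef := by
  subst he hJ hY
  rw [hX, hx]
  clear hX hx
  have hn' : (n : ℝ) ≠ 0 := Nat.cast_ne_zero.mpr hn.ne'
  -- symmetry of Y11
  have hsym : Y11.IsSymm := by
    refine Matrix.IsSymm.ext fun i j => ?_
    have := hYsymm.apply (Sum.inl j) (Sum.inl i)
    simpa using this.symm
  -- sum facts
  have hSA : ∑ i, ∑ j, Y11 i j = m1 ^ 2 := by rw [← traceJ_eq]; exact htrJ11
  have hSD : ∑ i, ∑ j, Y22 i j = m2 ^ 2 := by rw [← traceJ_eq]; exact htrJ22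
  have hSB : (∑ i, ∑ j, Y12 i j) + (∑ i, ∑ j, Y12 j i) = 2 * m1 * m2 := by
    have h := htrJ12
    rw [traceJ_eq] at h
    simpa [Matrix.add_apply, Matrix.transpose_apply, Finset.sum_add_distrib] using h
  have ht1 : ∑ i, Y11 i i = m1 := by simpa [Matrix.trace, Matrix.diag] using htr11
  have ht2 : ∑ i, Y22 i i = m2 := by simpa [Matrix.trace, Matrix.diag] using htr22
  set Y := Matrix.fromBlocks Y11 Y12 Y12ᵀ Y22 with hYdef
  set y : Fin n ⊕ Fin n → ℝ := Y.diag with hy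
  have hy' : y = Sum.elim Y11.diag Y22.diag := by
    funext p; cases p <;> rfl
  have key : ∀ u v : Fin n → ℝ,
      Sum.elim u v ⬝ᵥ (Y *ᵥ Sum.elim u v) =
        u ⬝ᵥ (Y11 *ᵥ u) + u ⬝ᵥ (Y12 *ᵥ v) + v ⬝ᵥ (Y12ᵀ *ᵥ u) + v ⬝ᵥ (Y22 *ᵥ v) := by
    intro u v
    rw [hYdef, Matrix.fromBlocks_mulVec]
    simp [sumElim_dotProduct_sumElim, dotProduct_add]
    ring
  -- the all-ones vector
  set f : Fin n ⊕ Fin n → ℝ := Sum.elim (fun _ => 1) (fun _ => 1) with hf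
  set g : Fin n ⊕ Fin n → ℝ := Sum.elim (fun _ => m2) (fun _ => -m1) with hg
  have hyf : y ⬝ᵥ f = (n : ℝ) := by
    rw [hy', hf, sumElim_dotProduct_sumElim]
    have d1 : Y11.diag ⬝ᵥ (fun _ => (1:ℝ)) = m1 := by
      rw [dotProduct_comm, constDot]; simpa [Matrix.diag] using ht1
    have d2 : Y22.diag ⬝ᵥ (fun _ => (1:ℝ)) = m2 := by
      rw [dotProduct_comm, constDot]; simpa [Matrix.diag] using ht2
    rw [d1, d2, hm]
  have hyg : y ⬝ᵥ g = 0 := by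
    rw [hy', hg, sumElim_dotProduct_sumElim]
    have d1 : Y11.diag ⬝ᵥ (fun _ => m2) = m2 * m1 := by
      rw [dotProduct_comm, constDot]; simpa [Matrix.diag] using congrArg (m2 * ·) ht1
    have d2 : Y22.diag ⬝ᵥ (fun _ => -m1) = -m1 * m2 := by
      rw [dotProduct_comm, constDot]; simpa [Matrix.diag] using congrArg (-m1 * ·) ht2
    rw [d1, d2]; ring
  have hMf : (Y - vecMulVec y y) *ᵥ f = Y *ᵥ f - (n : ℝ) • y := by
    rw [Matrix.sub_mulVec, vmv_mulVec, hyf]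
  have hMg : (Y - vecMulVec y y) *ᵥ g = Y *ᵥ g := by
    rw [Matrix.sub_mulVec, vmv_mulVec, hyg, zero_smul, sub_zero]
  have hqf : star f ⬝ᵥ ((Y - vecMulVec y y) *ᵥ f) = 0 := by
    have hstar : star f = f := by funext p; cases p <;> rfl
    rw [hstar, hMf, dotProduct_sub, dotProduct_smul]
    have h1 : f ⬝ᵥ (Y *ᵥ f) = (n:ℝ)^2 := by
      rw [hf, key, constQuad, constQuad, constQuad, constQuad, hSA, hSD]
      have : ∑ i, ∑ j, Y12ᵀ i j = ∑ i, ∑ j, Y12 j i := by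
        simp [Matrix.transpose_apply]
      rw [this]
      nlinarith [hSB]
    have h2 : f ⬝ᵥ y = (n : ℝ) := by rw [dotProduct_comm]; exact hyf
    rw [h1, h2]; simp; ring
  have hqg : star g ⬝ᵥ ((Y - vecMulVec y y) *ᵥ g) = 0 := by
    have hstar : star g = g := by funext p; cases p <;> rfl
    rw [hstar, hMg, hg, key, constQuad, constQuad, constQuad, constQuad, hSA, hSD]
    have : ∑ i, ∑ j, Y12ᵀ i j = ∑ i, ∑ j, Y12 j i := by
      simp [Matrix.transpose_apply]
    rw [this]
    linear_combination (-(m1*m2)) * hSB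
  have hf0 : (Y - vecMulVec y y) *ᵥ f = 0 := (hpsd.dotProduct_mulVec_zero_iff f).mp hqf
  have hg0 : (Y - vecMulVec y y) *ᵥ g = 0 := (hpsd.dotProduct_mulVec_zero_iff g).mp hqg
  have hYf : Y *ᵥ f = (n : ℝ) • y := by
    have h := hMf.symm.trans hf0
    rwa [sub_eq_zero] at h
  have hYg : Y *ᵥ g = 0 := hMg.symm.trans hg0
  refine ⟨hsym, ?_, htrJ11, ?_, ?_⟩
  · rw [constDot]; simpa [Matrix.diag] using ht1
  · funext i
    have h1 := congrFun hYf (Sum.inl i)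
    have h2 := congrFun hYg (Sum.inl i)
    rw [hYdef, Matrix.fromBlocks_mulVec] at h1 h2
    have e1 : (∑ j, Y11 i j) + (∑ j, Y12 i j) = (n:ℝ) * Y11 i i := by
      simpa [hf, Matrix.mulVec, dotProduct, hy, hYdef, Matrix.fromBlocks,
        Matrix.diag] using h1
    have e2 : m2 * (∑ j, Y11 i j) - m1 * (∑ j, Y12 i j) = 0 := by
      have h2' : (∑ j, Y11 i j * m2) + (∑ j, Y12 i j * -m1) = 0 := by
        simpa [hg, Matrix.mulVec, dotProduct] using h2
      rw [← Finset.sum_mul, ← Finset.sum_mul] at h2'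
      linear_combination h2'
    have hgoal : (∑ j, Y11 i j) = m1 * Y11 i i := by
      have hmul : (n:ℝ) * (∑ j, Y11 i j) = (n:ℝ) * (m1 * Y11 i i) := by
        linear_combination m1 * e1 + e2 + (-(∑ j, Y11 i j)) * hm
      exact mul_left_cancel₀ hn' hmul
    simpa [Matrix.mulVec, dotProduct, Matrix.diag] using hgoal
  · have hsub := hpsd.submatrix (Sum.inl : Fin n → Fin n ⊕ Fin n)
    have heq : (Y - vecMulVec y y).submatrix Sum.inl Sum.inl
        = Y11 - vecMulVec Y11.diag Y11.diag := by
      ext i j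
      simp [Matrix.submatrix_apply, Matrix.sub_apply, Matrix.vecMulVec_apply, hy, hYdef,
        Matrix.fromBlocks, Matrix.diag]
    rw [heq] at hsub
    have hdecomp : Y11 = (Y11 - vecMulVec Y11.diag Y11.diag) + vecMulVec Y11.diag Y11.diag := by
      abel
    rw [hdecomp]
    exact Matrix.posSemidef_iff_dotProduct_mulVec.mpr ⟨hsub.1.add (psd_vecMulVec _).1, fun v => by
      rw [Matrix.add_mulVec, dotProduct_add]
      exact add_nonneg (hsub.dotProduct_mulVec_nonneg v) ((psd_vecMulVec _).dotProduct_mulVec_nonneg v)⟩
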